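/- Let H be a numerical semigroup with 1 ∉ H, R = k[H] ⊆ S = k[t], and I an ideal of R with IS = t^q(1−t)S, where 0 < q ∈ H. Write 𝔞 = t^qS ∩ R = (t^{b₁},...,t^{b_n}) minimally, let 𝔟 = (t^{b₂},...,t^{b_n}), and choose b₀ = b ∈ H with t^b ∈ 𝔟 and gcd(b₁, b) = 1. Then the integral closure of I equals the ideal (t^{b₁} − t^{b₀}, { t^{b_i} − t^{b₀ + b_i} }_{2 ≤ i ≤ n}); in particular μ_R(Ī) ≤ μ_R(𝔞). -/

import Mathlib

/-!
Let `J` be the ideal spanned by the proposed generators and `Ī = t^q(1-t)S ∩ R`; clearly `J ⊆ Ī`.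
Conversely, an element of `Ī` has support in `H ∩ [q, ∞)` and coefficient sum `0`, so it is a
`k`-combination of differences `t^a - t^{b₁}` with `a ≥ q`. The generators of `J`, together with
`t^{b₀} ∈ 𝔟`, put `1 - t^{b₀}` and `1 - t^{b₁}` into the colon ideal `J : 𝔞`, hence also `1 - t^c`
for every `c` in the semigroup spanned by `b₁, b₀`; as `gcd(b₁, b₀) = 1`, this is every `c ≥ N`
for some `N`. Then `t^a - t^{a+d} = t^a (1 - t^{N+d}) - t^{a+d} (1 - t^N)` lies in `J` whenever
`t^a, t^{a+d} ∈ 𝔞`. Finally `μ(Ī) ≤ n` because `J` has `n` generators.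
-/

open Polynomial

noncomputable def muIdeal {A : Type*} [CommRing A] (I : Ideal A) : ℕ :=
  sInf {n | ∃ s : Finset A, s.card = n ∧ Ideal.span (s : Set A) = I}

theorem Nat.setGcd_pair (a b : ℕ) : Nat.setGcd {a, b} = Nat.gcd a b :=
  Nat.dvd_antisymm
    (Nat.dvd_gcd (Nat.setGcd_dvd_of_mem (by simp)) (Nat.setGcd_dvd_of_mem (by simp)))
    (Nat.dvd_setGcd_iff.mpr <| by
      rintro m (rfl | rfl)
      exacts [Nat.gcd_dvd_left _ _, Nat.gcd_dvd_right _ _])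

section CommRing

variable {A : Type*} [CommRing A]

theorem muIdeal_span_le_of_subset_range {n : ℕ} {s : Set A} {f : Fin n → A}
    (hs : s ⊆ Set.range f) : muIdeal (Ideal.span s) ≤ n := by
  classical
  have hfin : s.Finite := (Set.finite_range f).subset hs
  have hcard : hfin.toFinset.card ∈
      {n | ∃ t : Finset A, t.card = n ∧ Ideal.span (t : Set A) = Ideal.span s} :=
    ⟨hfin.toFinset, rfl, by rw [hfin.coe_toFinset]⟩
  refine (Nat.sInf_le hcard).trans ?_
  calc hfin.toFinset.card ≤ (Finset.univ.image f).card :=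
        Finset.card_le_card fun x hx => by simpa using hs (hfin.mem_toFinset.mp hx)
    _ ≤ n := Finset.card_image_le.trans (by simp)

theorem one_sub_dvd_pow_sub_pow (t : A) (i j : ℕ) : 1 - t ∣ t ^ i - t ^ j := by
  have h (i : ℕ) : 1 - t ∣ 1 - t ^ i := by simpa using sub_dvd_pow_sub_pow 1 t i
  rw [show t ^ i - t ^ j = (1 - t ^ j) - (1 - t ^ i) by ring]
  exact dvd_sub (h j) (h i)

theorem pow_mul_one_sub_dvd_pow_sub_pow (t : A) {q a c : ℕ} (ha : q ≤ a) (hc : q ≤ c) :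
    t ^ q * (1 - t) ∣ t ^ a - t ^ c := by
  obtain ⟨a, rfl⟩ := Nat.exists_eq_add_of_le ha
  obtain ⟨c, rfl⟩ := Nat.exists_eq_add_of_le hc
  rw [pow_add, pow_add, ← mul_sub]
  exact mul_dvd_mul_left _ (one_sub_dvd_pow_sub_pow t a c)

theorem one_sub_mem_colon_span {J : Ideal A} {S B : Set A} {u₀ u₁ : A}
    (hS : S ⊆ insert u₁ B) (hB : ∀ y ∈ B, y * (1 - u₀) ∈ J) (hu₀ : u₀ ∈ Ideal.span B)
    (hu₁ : u₁ - u₀ ∈ J) :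
    1 - u₀ ∈ J.colon (Ideal.span S : Set A) ∧ 1 - u₁ ∈ J.colon (Ideal.span S : Set A) := by
  rw [Ideal.colon_span]
  have hB' : 1 - u₀ ∈ J.colon B :=
    Submodule.mem_colon.mpr fun y hy => by rw [smul_eq_mul, mul_comm]; exact hB y hy
  have hu₀' : (1 - u₀) * u₀ ∈ J :=
    Submodule.mem_colon.mp (by rwa [Ideal.colon_span]) u₀ hu₀
  have h₀ : 1 - u₀ ∈ J.colon (insert u₁ B) := by
    refine Submodule.mem_colon.mpr (Set.forall_mem_insert.mpr ⟨?_, Submodule.mem_colon.mp hB'⟩)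
    rw [smul_eq_mul, show (1 - u₀) * u₁ = (1 - u₀) * (u₁ - u₀) + (1 - u₀) * u₀ by ring]
    exact add_mem (J.mul_mem_left _ hu₁) hu₀'
  refine ⟨Submodule.colon_mono le_rfl hS h₀, Submodule.colon_mono le_rfl hS ?_⟩
  rw [show 1 - u₁ = (1 - u₀) - (u₁ - u₀) by ring]
  exact sub_mem h₀ (Ideal.le_colon hu₁)

end CommRing

section SemigroupRing

variable (k : Type*) [CommRing k] (H : AddSubmonoid ℕ)

noncomputable abbrev semigroupRing : Subalgebra k k[X] :=
  Algebra.adjoin k {p | ∃ h ∈ H, p = X ^ h}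

variable {H}

noncomputable def xPow {m : ℕ} (hm : m ∈ H) : semigroupRing k H :=
  ⟨X ^ m, Algebra.subset_adjoin ⟨m, hm, rfl⟩⟩

variable {k}

@[simp]
theorem coe_xPow {m : ℕ} (hm : m ∈ H) : (xPow k hm : k[X]) = X ^ m := rfl

theorem xPow_zero (h : 0 ∈ H) : xPow k h = 1 :=
  Subtype.ext (pow_zero _)

theorem xPow_add {a b : ℕ} (ha : a ∈ H) (hb : b ∈ H) (hab : a + b ∈ H) :
    xPow k hab = xPow k ha * xPow k hb :=
  Subtype.ext (pow_add _ _ _)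

theorem mem_of_coeff_ne_zero_of_mem_semigroupRing {p : k[X]} (hp : p ∈ semigroupRing k H)
    {m : ℕ} (hm : p.coeff m ≠ 0) : m ∈ H := by
  induction hp using Algebra.adjoin_induction generalizing m with
  | mem p hp =>
    obtain ⟨h, hh, rfl⟩ := hp
    rw [coeff_X_pow] at hm
    split_ifs at hm with e
    · exact e ▸ hh
    · exact absurd rfl hm
  | algebraMap c =>
    rw [algebraMap_eq, coeff_C] at hm
    split_ifs at hm with e
    · exact e ▸ H.zero_mem
    · exact absurd rfl hm
  | add p r _ _ hp hr =>
    rw [coeff_add] at hm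
    by_cases hpm : p.coeff m = 0
    · exact hr (by simpa [hpm] using hm)
    · exact hp hpm
  | mul p r _ _ hp hr =>
    rw [coeff_mul] at hm
    obtain ⟨⟨i, j⟩, hij, hne⟩ := Finset.exists_ne_zero_of_sum_ne_zero hm
    rw [Finset.HasAntidiagonal.mem_antidiagonal] at hij
    exact hij ▸ add_mem (hp (left_ne_zero_of_mul hne)) (hr (right_ne_zero_of_mul hne))

theorem one_sub_xPow_mem_of_mem_closure {K : Ideal (semigroupRing k H)} {s : Set ℕ}
    (hs : ∀ u ∈ s, ∃ hu : u ∈ H, 1 - xPow k hu ∈ K) {c : ℕ}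
    (hc : c ∈ AddSubmonoid.closure s) : ∃ hc : c ∈ H, 1 - xPow k hc ∈ K := by
  induction hc using AddSubmonoid.closure_induction with
  | mem u hu => exact hs u hu
  | zero => exact ⟨H.zero_mem, by simp [xPow_zero]⟩
  | add c c' _ _ hc hc' =>
    obtain ⟨hcH, hcK⟩ := hc
    obtain ⟨hcH', hcK'⟩ := hc'
    refine ⟨add_mem hcH hcH', ?_⟩
    rw [xPow_add hcH hcH', show 1 - xPow k hcH * xPow k hcH' =
      (1 - xPow k hcH) + xPow k hcH * (1 - xPow k hcH') by ring]
    exact add_mem hcK (K.mul_mem_left _ hcK')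

theorem exists_forall_ge_one_sub_xPow_mem {K : Ideal (semigroupRing k H)} {s : Set ℕ}
    (hgcd : Nat.setGcd s = 1) (hs : ∀ u ∈ s, ∃ hu : u ∈ H, 1 - xPow k hu ∈ K) :
    ∃ N, ∀ m ≥ N, ∃ hm : m ∈ H, 1 - xPow k hm ∈ K := by
  obtain ⟨N, hN⟩ := Nat.exists_mem_closure_of_ge s
  exact ⟨N, fun m hm => one_sub_xPow_mem_of_mem_closure hs (hN m hm (hgcd ▸ one_dvd m))⟩

theorem xPow_sub_xPow_mem {J : Ideal (semigroupRing k H)} {S : Set (semigroupRing k H)} {N : ℕ}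
    (hN : ∀ m ≥ N, ∃ hm : m ∈ H, 1 - xPow k hm ∈ J.colon S) {a a' : ℕ} (ha : a ∈ H)
    (ha' : a' ∈ H) (haS : xPow k ha ∈ S) (haS' : xPow k ha' ∈ S) :
    xPow k ha - xPow k ha' ∈ J := by
  wlog hle : a ≤ a' generalizing a a'
  · simpa using J.neg_mem (this ha' ha haS' haS (le_of_not_ge hle))
  obtain ⟨d, rfl⟩ := Nat.exists_eq_add_of_le hle
  obtain ⟨hNd, hNdK⟩ := hN (N + d) (Nat.le_add_right N d)
  obtain ⟨hN', hNK⟩ := hN N le_rfl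
  have key : xPow k ha - xPow k ha' =
      (1 - xPow k hNd) • xPow k ha - (1 - xPow k hN') • xPow k ha' := by
    simp only [smul_eq_mul]
    apply Subtype.ext
    push_cast [coe_xPow]
    ring
  rw [key]
  exact sub_mem (Submodule.mem_colon.mp hNdK _ haS) (Submodule.mem_colon.mp hNK _ haS')

theorem comap_span_X_pow_mul_one_sub_X_le {J : Ideal (semigroupRing k H)} {q c : ℕ}
    (hc : c ∈ H) (hJ : ∀ a (ha : a ∈ H), q ≤ a → xPow k ha - xPow k hc ∈ J) :
    (Ideal.span {X ^ q * (1 - X)}).comap (algebraMap (semigroupRing k H) k[X]) ≤ J := by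
  intro x hx
  obtain ⟨g, hg : (x : k[X]) = _⟩ := Ideal.mem_span_singleton.mp (Ideal.mem_comap.mp hx)
  have hxq : (X : k[X]) ^ q ∣ x := hg ▸ (dvd_mul_right _ _).mul_right g
  have hx1 : ∑ m ∈ (x : k[X]).support, (x : k[X]).coeff m = 0 := by
    have heval : (x : k[X]).eval 1 = 0 := by simp [hg]
    simpa [eval_eq_sum, Polynomial.sum_def] using heval
  suffices hP : (x : k[X]) ∈ (J.restrictScalars k).map (semigroupRing k H).val.toLinearMap by
    obtain ⟨y, hy, hyx⟩ := Submodule.mem_map.mp hP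
    rwa [← Subtype.ext hyx]
  have hsum : (x : k[X]) = ∑ m ∈ (x : k[X]).support, (x : k[X]).coeff m • (X ^ m - X ^ c) := by
    simp_rw [smul_sub, Finset.sum_sub_distrib, ← Finset.sum_smul, hx1, zero_smul, sub_zero,
      smul_eq_C_mul]
    exact as_sum_support_C_mul_X_pow _
  rw [hsum]
  refine Submodule.sum_mem _ fun m hm => Submodule.smul_mem _ _ ?_
  have hqm : q ≤ m := by
    by_contra! hlt
    exact mem_support_iff.mp hm (X_pow_dvd_iff.mp hxq m hlt)
  exact ⟨_, hJ m (mem_of_coeff_ne_zero_of_mem_semigroupRing x.2 (mem_support_iff.mp hm)) hqm, rfl⟩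

theorem xPow_mem_comap_span_X_pow_iff [IsDomain k] {q a : ℕ} (ha : a ∈ H) :
    xPow k ha ∈ (Ideal.span {X ^ q}).comap (algebraMap (semigroupRing k H) k[X]) ↔ q ≤ a := by
  rw [Ideal.mem_comap, Ideal.mem_span_singleton]
  exact pow_dvd_pow_iff X_ne_zero not_isUnit_X

end SemigroupRing

theorem span_le_comap_span_X_pow_mul_one_sub_X {k : Type*} [CommRing k]
    {R : Subalgebra k k[X]} {q : ℕ} {G : Set R}
    (hG : ∀ x ∈ G, ∃ a c, q ≤ a ∧ q ≤ c ∧ (x : k[X]) = X ^ a - X ^ c) :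
    Ideal.span G ≤ (Ideal.span {X ^ q * (1 - X)}).comap (algebraMap R k[X]) := by
  rw [Ideal.span_le]
  intro x hx
  obtain ⟨a, c, ha, hc, hx⟩ := hG x hx
  rw [SetLike.mem_coe, Ideal.mem_comap, Ideal.mem_span_singleton]
  change _ ∣ (x : k[X])
  exact hx ▸ pow_mul_one_sub_dvd_pow_sub_pow X ha hc

theorem integral_closure_explicit_generators_general
    (k : Type*) [Field k] (H : AddSubmonoid ℕ)
    (R : Subalgebra k (Polynomial k))
    (hRdef : R = Algebra.adjoin k {p : Polynomial k | ∃ h ∈ H, p = (X : Polynomial k) ^ h})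
    (I : Ideal R) (q : ℕ)
    (hIS : I.map (algebraMap R (Polynomial k)) =
      Ideal.span {(X : Polynomial k) ^ q * (1 - X)})
    (n : ℕ) (hn : 0 < n) (b : Fin n → ℕ) (hbH : ∀ i, b i ∈ H) (hbq : ∀ i, q ≤ b i)
    (h𝔞 : (Ideal.span {(X : Polynomial k) ^ q}).comap (algebraMap R (Polynomial k)) =
      Ideal.span {x : R | ∃ i : Fin n, (x : Polynomial k) = (X : Polynomial k) ^ (b i)})
    (𝔟 : Ideal R)
    (h𝔟 : 𝔟 = Ideal.span {x : R | ∃ i : Fin n, i ≠ (⟨0, hn⟩ : Fin n) ∧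
      (x : Polynomial k) = (X : Polynomial k) ^ (b i)})
    (b₀ : ℕ) (hb₀H : b₀ ∈ H)
    (hb₀𝔟 : ∀ x : R, (x : Polynomial k) = (X : Polynomial k) ^ b₀ → x ∈ 𝔟)
    (hgcd : Nat.gcd (b ⟨0, hn⟩) b₀ = 1) :
    (I.map (algebraMap R (Polynomial k))).comap (algebraMap R (Polynomial k)) =
        Ideal.span {x : R |
          (x : Polynomial k) = (X : Polynomial k) ^ (b ⟨0, hn⟩) - X ^ b₀ ∨
          ∃ i : Fin n, i ≠ (⟨0, hn⟩ : Fin n) ∧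
            (x : Polynomial k) = (X : Polynomial k) ^ (b i) - X ^ (b₀ + b i)} ∧
      muIdeal ((I.map (algebraMap R (Polynomial k))).comap
        (algebraMap R (Polynomial k))) ≤ n := by
  subst hRdef h𝔟
  rw [hIS]
  set i₀ : Fin n := ⟨0, hn⟩
  set J := Ideal.span {x : semigroupRing k H |
    (x : k[X]) = X ^ (b i₀) - X ^ b₀ ∨ ∃ i, i ≠ i₀ ∧ (x : k[X]) = X ^ (b i) - X ^ (b₀ + b i)}
  have hA : {x : semigroupRing k H | ∃ i, (x : k[X]) = X ^ (b i)} ⊆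
      insert (xPow k (hbH i₀)) {x | ∃ i, i ≠ i₀ ∧ (x : k[X]) = X ^ (b i)} := by
    rintro x ⟨i, hx⟩
    by_cases hi : i = i₀
    · exact Or.inl (Subtype.ext (hi ▸ hx))
    · exact Or.inr ⟨i, hi, hx⟩
  obtain ⟨hb₀J, hb₁J⟩ := one_sub_mem_colon_span (J := J) hA
    (by
      rintro y ⟨i, hi, hy⟩
      exact Ideal.subset_span (Or.inr ⟨i, hi, by simp [hy, pow_add]; ring⟩))
    (hb₀𝔟 (xPow k hb₀H) rfl) (Ideal.subset_span (Or.inl rfl))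
  rw [← h𝔞] at hb₀J hb₁J
  obtain ⟨N, hN⟩ := exists_forall_ge_one_sub_xPow_mem (s := {b i₀, b₀})
    (by rw [Nat.setGcd_pair, hgcd]) (by
      rintro u (rfl | rfl)
      exacts [⟨hbH i₀, hb₁J⟩, ⟨hb₀H, hb₀J⟩])
  have hqb₀ : q ≤ b₀ := (xPow_mem_comap_span_X_pow_iff hb₀H).mp <| h𝔞 ▸
    Ideal.span_mono (by rintro x ⟨i, -, hx⟩; exact ⟨i, hx⟩) (hb₀𝔟 _ rfl)
  have hĪ : (Ideal.span {(X : k[X]) ^ q * (1 - X)}).comap (algebraMap _ k[X]) = J := by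
    refine le_antisymm (comap_span_X_pow_mul_one_sub_X_le (hbH i₀) fun a ha hqa =>
      xPow_sub_xPow_mem hN ha _ ((xPow_mem_comap_span_X_pow_iff ha).mpr hqa)
        ((xPow_mem_comap_span_X_pow_iff _).mpr (hbq i₀))) ?_
    refine span_le_comap_span_X_pow_mul_one_sub_X ?_
    rintro x (hx | ⟨i, -, hx⟩)
    exacts [⟨_, _, hbq i₀, hqb₀, hx⟩, ⟨_, _, hbq i, by omega, hx⟩]
  refine ⟨hĪ, hĪ ▸ muIdeal_span_le_of_subset_range
    (f := fun i => if i = i₀ then xPow k (hbH i₀) - xPow k hb₀H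
      else xPow k (hbH i) - xPow k (H.add_mem hb₀H (hbH i))) ?_⟩
  rintro x (hx | ⟨i, hi, hx⟩)
  · exact ⟨i₀, Subtype.ext (by simp [hx])⟩
  · exact ⟨i, Subtype.ext (by simp [hi, hx])⟩

/-- let `H` be a numerical semigroup with `1 ∉ H`, `R = k[H]`, and `I`
an ideal of `R` with `IS = t^q(1−t)S`, `0 < q ∈ H`. Write `𝔞 = t^qS ∩ R =
(t^{b₁},…,t^{b_n})` minimally, `𝔟 = (t^{b₂},…,t^{b_n})`, and choose `b₀ ∈ H` with
`t^{b₀} ∈ 𝔟` and `gcd(b₁, b₀) = 1`. Then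
`Ī = (t^{b₁} − t^{b₀}, {t^{bᵢ} − t^{b₀+bᵢ}}_{2 ≤ i ≤ n})`; in particular
`μ_R(Ī) ≤ μ_R(𝔞) = n`. -/
theorem integral_closure_explicit_generators
    (k : Type*) [Field k] (H : AddSubmonoid ℕ) (hfin : ((H : Set ℕ)ᶜ).Finite)
    (h1 : (1 : ℕ) ∉ H)
    (R : Subalgebra k (Polynomial k))
    (hRdef : R = Algebra.adjoin k {p : Polynomial k | ∃ h ∈ H, p = (X : Polynomial k) ^ h})
    (I : Ideal R) (q : ℕ) (hqH : q ∈ H) (hq : 0 < q)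
    (hIS : I.map (algebraMap R (Polynomial k)) =
      Ideal.span {(X : Polynomial k) ^ q * (1 - X)})
    (n : ℕ) (hn : 0 < n) (b : Fin n → ℕ) (hbH : ∀ i, b i ∈ H) (hbq : ∀ i, q ≤ b i)
    (h𝔞 : (Ideal.span {(X : Polynomial k) ^ q}).comap (algebraMap R (Polynomial k)) =
      Ideal.span {x : R | ∃ i : Fin n, (x : Polynomial k) = (X : Polynomial k) ^ (b i)})
    (hmin : muIdeal ((Ideal.span {(X : Polynomial k) ^ q}).comap
      (algebraMap R (Polynomial k))) = n)
    (𝔟 : Ideal R)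
    (h𝔟 : 𝔟 = Ideal.span {x : R | ∃ i : Fin n, i ≠ (⟨0, hn⟩ : Fin n) ∧
      (x : Polynomial k) = (X : Polynomial k) ^ (b i)})
    (b₀ : ℕ) (hb₀H : b₀ ∈ H)
    (hb₀𝔟 : ∀ x : R, (x : Polynomial k) = (X : Polynomial k) ^ b₀ → x ∈ 𝔟)
    (hgcd : Nat.gcd (b ⟨0, hn⟩) b₀ = 1) :
    (I.map (algebraMap R (Polynomial k))).comap (algebraMap R (Polynomial k)) =
        Ideal.span {x : R |
          (x : Polynomial k) = (X : Polynomial k) ^ (b ⟨0, hn⟩) - X ^ b₀ ∨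
          ∃ i : Fin n, i ≠ (⟨0, hn⟩ : Fin n) ∧
            (x : Polynomial k) = (X : Polynomial k) ^ (b i) - X ^ (b₀ + b i)} ∧
      muIdeal ((I.map (algebraMap R (Polynomial k))).comap
        (algebraMap R (Polynomial k))) ≤ n :=
  integral_closure_explicit_generators_general k H R hRdef I q hIS n hn b hbH hbq h𝔞 𝔟 h𝔟 b₀ hb₀H
    hb₀𝔟 hgcd
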